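/- arXiv:2512.12796 — 2 statements merged into one kernel-verified Lean document; each statement's English description precedes it below -/
import Mathlib

section
/- For the family of densities f_κ(x) = (1 − κ⁴) / (π ((1 − κ²)² + 4κ²x²) √(1 − x²)) on (−1,1) with parameter κ ∈ [0,1): f_κ defines a probability measure μ_κ, μ_κ has mean zero, and the variance of μ_κ equals (1 − κ²)/2. -/
/-!
With `a = 1 - κ²`, `b = 1 + κ²` the density is `π⁻¹ a b / (q(x) √(1 - x²))` with
`q(x) = a²(1 - x²) + b²x²`, which has the primitive `π⁻¹ arcsin (b x / √q(x))`, continuous on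
`[-1, 1]` and running from `-1/2` to `1/2`; this gives the total mass `1` (and, for `a = b = 1`,
`∫ (1 - x²)^(-1/2) = π`). The density is even, so the mean vanishes. Since
`4κ²x² = q(x) - (1 - κ²)²`, the second moment is a combination of the total mass and of
`∫ (1 - x²)^(-1/2)`; for `κ = 0` one uses `x² / √(1 - x²) = 1 / √(1 - x²) - √(1 - x²)` instead.
-/

open Real MeasureTheory Set

lemma isProbabilityMeasure_of_integral_one_eq_one {X : Type*} [MeasurableSpace X]
    {μ : Measure X} (h : ∫ _, (1 : ℝ) ∂μ = 1) : IsProbabilityMeasure μ := by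
  rw [integral_const, smul_eq_mul, mul_one, measureReal_def, ENNReal.toReal_eq_one_iff] at h
  exact ⟨h⟩

lemma integral_withDensity_ofReal_indicator_Ioo {f : ℝ → ℝ} {a b : ℝ} (hab : a ≤ b)
    (hf : Measurable f) (hf₀ : ∀ x ∈ Ioo a b, 0 ≤ f x) (g : ℝ → ℝ) :
    ∫ x, g x ∂volume.withDensity (fun x => ENNReal.ofReal ((Ioo a b).indicator f x)) =
      ∫ x in a..b, f x * g x := by
  rw [integral_withDensity_eq_integral_toReal_smul
    (hf.indicator measurableSet_Ioo).ennreal_ofReal (.of_forall fun _ => ENNReal.ofReal_lt_top),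
    intervalIntegral.integral_of_le hab, integral_Ioc_eq_integral_Ioo,
    ← integral_indicator measurableSet_Ioo]
  congr 1 with x
  by_cases hx : x ∈ Ioo a b
  · simp [hx, ENNReal.toReal_ofReal (hf₀ x hx)]
  · simp [hx]

lemma intervalIntegral.integral_eq_zero_of_odd {f : ℝ → ℝ} (hf : Function.Odd f) (a : ℝ) :
    ∫ x in -a..a, f x = 0 := by
  have h := intervalIntegral.integral_comp_neg (a := -a) (b := a) f
  simp only [hf _, intervalIntegral.integral_neg, neg_neg] at h
  linarith

lemma intervalIntegrable_and_integral_eq_sub_of_hasDerivAt_of_nonneg {f f' : ℝ → ℝ} {a b : ℝ}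
    (hab : a ≤ b) (hf : ContinuousOn f (Icc a b)) (hderiv : ∀ x ∈ Ioo a b, HasDerivAt f (f' x) x)
    (hf' : ∀ x ∈ Ioo a b, 0 ≤ f' x) :
    IntervalIntegrable f' volume a b ∧ ∫ x in a..b, f' x = f b - f a := by
  have hint : IntervalIntegrable f' volume a b := by
    apply intervalIntegral.intervalIntegrable_deriv_of_nonneg <;>
      simpa only [uIcc_of_le hab, min_eq_left hab, max_eq_right hab]
  exact ⟨hint, intervalIntegral.integral_eq_sub_of_hasDerivAt_of_le hab hf hderiv hint⟩

section ArcsinPrimitive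

variable {a b : ℝ}

lemma hasDerivAt_arcsin_mul_div_sqrt (ha : 0 < a) {y : ℝ} (hy : y ∈ Ioo (-1 : ℝ) 1) :
    HasDerivAt (fun y => arcsin (b * y / √(a ^ 2 * (1 - y ^ 2) + b ^ 2 * y ^ 2)))
      (a * b / ((a ^ 2 * (1 - y ^ 2) + b ^ 2 * y ^ 2) * √(1 - y ^ 2))) y := by
  obtain ⟨hy₁, hy₂⟩ := hy
  have hs₀ : 0 < 1 - y ^ 2 := by nlinarith
  have hq₀ : 0 < a ^ 2 * (1 - y ^ 2) + b ^ 2 * y ^ 2 := by positivity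
  have hq : HasDerivAt (fun y => a ^ 2 * (1 - y ^ 2) + b ^ 2 * y ^ 2)
      (2 * (b ^ 2 - a ^ 2) * y) y := by
    refine ((((hasDerivAt_pow 2 y).const_sub 1).const_mul (a ^ 2)).add
      ((hasDerivAt_pow 2 y).const_mul (b ^ 2))).congr_deriv ?_
    ring
  have hu := ((hasDerivAt_id y).const_mul b).div (hq.sqrt hq₀.ne') (sqrt_pos.mpr hq₀).ne'
  set q := a ^ 2 * (1 - y ^ 2) + b ^ 2 * y ^ 2
  have hs2 : √(1 - y ^ 2) ^ 2 = 1 - y ^ 2 := sq_sqrt hs₀.le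
  have ht2 : √q ^ 2 = q := sq_sqrt hq₀.le
  have h1u : 1 - (b * y / √q) ^ 2 = (a * √(1 - y ^ 2) / √q) ^ 2 := by
    field_simp
    rw [ht2, hs2]
    ring
  have hu₀ : 0 < 1 - (b * y / √q) ^ 2 := h1u ▸ by positivity
  have harcsin := hasDerivAt_arcsin (x := b * y / √q) (by rintro h; simp [h] at hu₀)
    (by rintro h; simp [h] at hu₀)
  refine (harcsin.comp y hu).congr_deriv ?_
  rw [h1u, sqrt_sq (by positivity)]
  simp only [id, mul_one]
  field_simp
  rw [ht2]
  ring

lemma continuous_arcsin_mul_div_sqrt (ha : 0 < a) (hab : a ≤ b) :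
    Continuous (fun y => arcsin (b * y / √(a ^ 2 * (1 - y ^ 2) + b ^ 2 * y ^ 2))) := by
  refine continuous_arcsin.comp ((continuous_const.mul continuous_id).div (by fun_prop) ?_)
  intro y
  have : a ^ 2 ≤ b ^ 2 := pow_le_pow_left₀ ha.le hab 2
  exact (sqrt_pos.mpr (by nlinarith [sq_nonneg y])).ne'

lemma arcsin_mul_div_sqrt_one (hb : 0 < b) :
    arcsin (b * 1 / √(a ^ 2 * (1 - 1 ^ 2) + b ^ 2 * 1 ^ 2)) = π / 2 := by
  simp [sqrt_sq hb.le, hb.ne']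

lemma arcsin_mul_div_sqrt_neg_one (hb : 0 < b) :
    arcsin (b * (-1) / √(a ^ 2 * (1 - (-1) ^ 2) + b ^ 2 * (-1) ^ 2)) = -(π / 2) := by
  simp [sqrt_sq hb.le, hb.ne']

lemma intervalIntegrable_and_integral_mul_div_sqrt_one_sub_sq (ha : 0 < a) (hab : a ≤ b) :
    IntervalIntegrable (fun x => a * b / ((a ^ 2 * (1 - x ^ 2) + b ^ 2 * x ^ 2) * √(1 - x ^ 2)))
      volume (-1) 1 ∧
    ∫ x in (-1 : ℝ)..1, a * b / ((a ^ 2 * (1 - x ^ 2) + b ^ 2 * x ^ 2) * √(1 - x ^ 2)) = π := by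
  have hb : 0 < b := ha.trans_le hab
  have h := intervalIntegrable_and_integral_eq_sub_of_hasDerivAt_of_nonneg (by norm_num)
    (continuous_arcsin_mul_div_sqrt ha hab).continuousOn
    (fun x hx => hasDerivAt_arcsin_mul_div_sqrt (b := b) ha hx)
    (fun x ⟨hx₁, hx₂⟩ => by
      have : 0 < 1 - x ^ 2 := by nlinarith
      positivity)
  rw [arcsin_mul_div_sqrt_one hb, arcsin_mul_div_sqrt_neg_one hb] at h
  exact ⟨h.1, h.2.trans (by ring)⟩

end ArcsinPrimitive

lemma intervalIntegrable_and_integral_inv_sqrt_one_sub_sq :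
    IntervalIntegrable (fun x => (√(1 - x ^ 2))⁻¹) volume (-1) 1 ∧
    ∫ x in (-1 : ℝ)..1, (√(1 - x ^ 2))⁻¹ = π := by
  have h : (fun x : ℝ => (√(1 - x ^ 2))⁻¹) =
      fun x => 1 * 1 / ((1 ^ 2 * (1 - x ^ 2) + 1 ^ 2 * x ^ 2) * √(1 - x ^ 2)) := by
    ext x; ring_nf
  simpa only [h] using intervalIntegrable_and_integral_mul_div_sqrt_one_sub_sq one_pos le_rfl

noncomputable def discExitDensity (κ x : ℝ) : ℝ :=
  (1 - κ ^ 4) / (π * ((1 - κ ^ 2) ^ 2 + 4 * κ ^ 2 * x ^ 2) * √(1 - x ^ 2))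

namespace discExitDensity

variable {κ : ℝ}

lemma eq_inv_pi_mul (κ x : ℝ) : discExitDensity κ x = π⁻¹ * ((1 - κ ^ 2) * (1 + κ ^ 2) /
    (((1 - κ ^ 2) ^ 2 * (1 - x ^ 2) + (1 + κ ^ 2) ^ 2 * x ^ 2) * √(1 - x ^ 2))) := by
  rw [discExitDensity, show (1 - κ ^ 2) ^ 2 * (1 - x ^ 2) + (1 + κ ^ 2) ^ 2 * x ^ 2 =
    (1 - κ ^ 2) ^ 2 + 4 * κ ^ 2 * x ^ 2 by ring]
  simp only [div_eq_mul_inv, mul_inv]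
  ring

lemma nonneg (hκ : κ ^ 2 < 1) (x : ℝ) : 0 ≤ discExitDensity κ x := by
  have : 0 ≤ 1 - κ ^ 4 := by nlinarith
  unfold discExitDensity
  positivity

lemma neg (κ x : ℝ) : discExitDensity κ (-x) = discExitDensity κ x := by
  simp [discExitDensity]

lemma measurable (κ : ℝ) : Measurable (discExitDensity κ) := by
  unfold discExitDensity
  fun_prop

lemma intervalIntegrable_and_integral_eq_one (hκ : κ ^ 2 < 1) :
    IntervalIntegrable (discExitDensity κ) volume (-1) 1 ∧
    ∫ x in (-1 : ℝ)..1, discExitDensity κ x = 1 := by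
  have h := intervalIntegrable_and_integral_mul_div_sqrt_one_sub_sq (a := 1 - κ ^ 2)
    (b := 1 + κ ^ 2) (by linarith) (by nlinarith)
  rw [show discExitDensity κ = _ from funext (eq_inv_pi_mul κ)]
  refine ⟨h.1.const_mul _, ?_⟩
  rw [intervalIntegral.integral_const_mul, h.2, inv_mul_cancel₀ pi_ne_zero]

-- `4κ²x²` is the denominator quadratic minus `(1 - κ²)²`; at `x = ±1` every term is `0`.
lemma four_mul_sq_mul_mul_sq (hκ : κ ^ 2 < 1) (x : ℝ) :
    4 * κ ^ 2 * (discExitDensity κ x * x ^ 2) =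
      π⁻¹ * (1 - κ ^ 4) * (√(1 - x ^ 2))⁻¹ - (1 - κ ^ 2) ^ 2 * discExitDensity κ x := by
  have hq : (1 - κ ^ 2) ^ 2 + 4 * κ ^ 2 * x ^ 2 ≠ 0 := by
    have : 0 < 1 - κ ^ 2 := by linarith
    positivity
  simp only [discExitDensity, div_eq_mul_inv, mul_inv]
  linear_combination (π⁻¹ * (1 - κ ^ 4) * (√(1 - x ^ 2))⁻¹) * mul_inv_cancel₀ hq

lemma zero_apply_mul_sq (x : ℝ) :
    discExitDensity 0 x * x ^ 2 = π⁻¹ * ((√(1 - x ^ 2))⁻¹ - √(1 - x ^ 2)) := by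
  rcases (sqrt_nonneg (1 - x ^ 2)).eq_or_lt with hs | hs
  · simp [discExitDensity, ← hs]
  · have hs2 := sq_sqrt (sqrt_pos.mp hs).le
    simp only [discExitDensity]
    field_simp
    linear_combination hs2

lemma integral_mul_sq (hκ : κ ^ 2 < 1) :
    ∫ x in (-1 : ℝ)..1, discExitDensity κ x * x ^ 2 = (1 - κ ^ 2) / 2 := by
  obtain ⟨hg, hg'⟩ := intervalIntegrable_and_integral_inv_sqrt_one_sub_sq
  rcases eq_or_ne κ 0 with rfl | hκ₀
  · have hs : IntervalIntegrable (fun x : ℝ => √(1 - x ^ 2)) volume (-1) 1 := by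
      apply Continuous.intervalIntegrable
      fun_prop
    simp only [zero_apply_mul_sq]
    rw [intervalIntegral.integral_const_mul, intervalIntegral.integral_sub hg hs, hg',
      integral_sqrt_one_sub_sq]
    field_simp
    ring
  · obtain ⟨hf, hf'⟩ := intervalIntegrable_and_integral_eq_one hκ
    have h (x : ℝ) : discExitDensity κ x * x ^ 2 = (4 * κ ^ 2)⁻¹ *
        (π⁻¹ * (1 - κ ^ 4) * (√(1 - x ^ 2))⁻¹ - (1 - κ ^ 2) ^ 2 * discExitDensity κ x) := by
      rw [← four_mul_sq_mul_mul_sq hκ, inv_mul_cancel_left₀ (by positivity)]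
    simp only [h]
    rw [intervalIntegral.integral_const_mul, intervalIntegral.integral_sub (hg.const_mul _)
      (hf.const_mul _), intervalIntegral.integral_const_mul, intervalIntegral.integral_const_mul,
      hg', hf']
    field_simp
    ring

end discExitDensity

/-- For `κ ∈ [0,1)`, the density
`f_κ(x) = (1-κ⁴)/(π((1-κ²)² + 4κ²x²)√(1-x²))` on `(-1,1)` defines a probability
measure with mean zero and variance `(1-κ²)/2`. -/
theorem stmt_5 (κ : ℝ) (hκ : κ ∈ Ico (0 : ℝ) 1) (μ : Measure ℝ)
    (hμ : μ = volume.withDensity (fun x : ℝ =>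
      ENNReal.ofReal ((Ioo (-1 : ℝ) 1).indicator
        (fun x => (1 - κ ^ 4) /
          (π * ((1 - κ ^ 2) ^ 2 + 4 * κ ^ 2 * x ^ 2) * Real.sqrt (1 - x ^ 2))) x))) :
    IsProbabilityMeasure μ ∧ (∫ x, x ∂μ) = 0 ∧ (∫ x, x ^ 2 ∂μ) = (1 - κ ^ 2) / 2 := by
  have hκ' : κ ^ 2 < 1 := by nlinarith [hκ.1, hκ.2]
  have hμ_integral (g : ℝ → ℝ) : ∫ x, g x ∂μ = ∫ x in (-1 : ℝ)..1, discExitDensity κ x * g x :=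
    hμ ▸ integral_withDensity_ofReal_indicator_Ioo (by norm_num) (discExitDensity.measurable κ)
      (fun x _ => discExitDensity.nonneg hκ' x) g
  refine ⟨isProbabilityMeasure_of_integral_one_eq_one ?_, ?_, ?_⟩
  · simpa [hμ_integral] using (discExitDensity.intervalIntegrable_and_integral_eq_one hκ').2
  · rw [hμ_integral]
    exact intervalIntegral.integral_eq_zero_of_odd (fun x => by simp [discExitDensity.neg]) 1
  · rw [hμ_integral, discExitDensity.integral_mul_sq hκ']
end

section
/- With μ_κ the probability measure on (−1,1) with density (1 − κ⁴)/(π((1 − κ²)² + 4κ²x²)√(1 − x²)), the variance Var(μ_κ) = (1 − κ²)/2 tends to 0 as κ → 1⁻; consequently inf over κ ∈ [0,1) of Var(μ_κ) is 0. -/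
/-!
Substitute `x = sin θ` and put `a = 1 - κ²`, `b = 1 + κ²`, so that
`(1 - κ²)² + 4κ² sin² θ = a² cos² θ + b² sin² θ`. The variance becomes
`(1 - κ⁴)/π · ∫_{-π/2}^{π/2} sin² θ / (a² cos² θ + b² sin² θ) dθ`, and since
`(b² - a²) sin² θ = (a² cos² θ + b² sin² θ) - a²` this reduces to
`∫_{-π/2}^{π/2} ab / (a² cos² θ + b² sin² θ) dθ = π`, the total increase of a continuous branch
of `arctan ((b / a) tan θ)`. Hence `Var(μ_κ) = (1 - κ⁴) / (b (a + b)) = (1 - κ²)/2`, which is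
nonnegative and tends to `0` as `κ → 1`.
-/

open Real MeasureTheory Set Filter

lemma mul_cos_sq_add_mul_sin_sq_pos {a b : ℝ} (ha : 0 < a) (hb : 0 < b) (t : ℝ) :
    0 < a * cos t ^ 2 + b * sin t ^ 2 := by
  nlinarith [sin_sq_add_cos_sq t, lt_min ha hb,
    mul_le_mul_of_nonneg_right (min_le_left a b) (sq_nonneg (cos t)),
    mul_le_mul_of_nonneg_right (min_le_right a b) (sq_nonneg (sin t))]

/-- On `(-π/2, π/2)` this antiderivative is `arctan ((b / a) * tan t)`; unlike that one, it is
smooth across the poles of `tan`. -/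
lemma hasDerivAt_add_arctan {a b : ℝ} (ha : 0 < a) (hb : 0 < b) (θ : ℝ) :
    HasDerivAt (fun t => t + arctan ((b - a) * sin t * cos t / (a * cos t ^ 2 + b * sin t ^ 2)))
      (a * b / (a ^ 2 * cos θ ^ 2 + b ^ 2 * sin θ ^ 2)) θ := by
  have hnum : HasDerivAt (fun t => (b - a) * sin t * cos t)
      ((b - a) * (cos θ ^ 2 - sin θ ^ 2)) θ :=
    (((hasDerivAt_sin θ).const_mul (b - a)).mul (hasDerivAt_cos θ)).congr_deriv (by ring)
  have hden : HasDerivAt (fun t => a * cos t ^ 2 + b * sin t ^ 2)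
      (2 * (b - a) * sin θ * cos θ) θ :=
    ((((hasDerivAt_cos θ).pow 2).const_mul a).add
      (((hasDerivAt_sin θ).pow 2).const_mul b)).congr_deriv (by simp; ring)
  have hv := (mul_cos_sq_add_mul_sin_sq_pos ha hb θ).ne'
  have hD := (mul_cos_sq_add_mul_sin_sq_pos (pow_pos ha 2) (pow_pos hb 2) θ).ne'
  refine ((hasDerivAt_id θ).add (hnum.div hden hv).arctan).congr_deriv ?_
  simp only [Pi.div_apply]
  field_simp
  rw [cos_sq']
  ring

lemma continuous_mul_div_mul_cos_sq_add_mul_sin_sq {a b : ℝ} (ha : 0 < a) (hb : 0 < b) (c : ℝ) :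
    Continuous fun θ => c / (a ^ 2 * cos θ ^ 2 + b ^ 2 * sin θ ^ 2) :=
  continuous_const.div (by fun_prop)
    (mul_cos_sq_add_mul_sin_sq_pos (pow_pos ha 2) (pow_pos hb 2) · |>.ne')

lemma integral_mul_div_mul_cos_sq_add_mul_sin_sq {a b : ℝ} (ha : 0 < a) (hb : 0 < b) :
    ∫ θ in -(π / 2)..π / 2, a * b / (a ^ 2 * cos θ ^ 2 + b ^ 2 * sin θ ^ 2) = π := by
  rw [intervalIntegral.integral_eq_sub_of_hasDerivAt (fun θ _ => hasDerivAt_add_arctan ha hb θ)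
    ((continuous_mul_div_mul_cos_sq_add_mul_sin_sq ha hb _).intervalIntegrable _ _)]
  simp

lemma integral_sin_sq_div_mul_cos_sq_add_mul_sin_sq {a b : ℝ} (ha : 0 < a) (hb : 0 < b) :
    ∫ θ in -(π / 2)..π / 2, sin θ ^ 2 / (a ^ 2 * cos θ ^ 2 + b ^ 2 * sin θ ^ 2)
      = π / (b * (a + b)) := by
  rcases eq_or_ne a b with rfl | hab
  · have hD : ∀ θ, a ^ 2 * cos θ ^ 2 + a ^ 2 * sin θ ^ 2 = a ^ 2 := fun θ => by
      rw [← mul_add, cos_sq_add_sin_sq, mul_one]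
    simp [hD, integral_sin_sq]
    field_simp
    ring
  · have hD θ := (mul_cos_sq_add_mul_sin_sq_pos (pow_pos ha 2) (pow_pos hb 2) θ).ne'
    have hba : b ^ 2 - a ^ 2 ≠ 0 :=
      sub_ne_zero.2 fun h => hab ((pow_left_inj₀ ha.le hb.le two_ne_zero).1 h.symm)
    have hsplit : ∀ θ, sin θ ^ 2 / (a ^ 2 * cos θ ^ 2 + b ^ 2 * sin θ ^ 2)
        = (b ^ 2 - a ^ 2)⁻¹ * (1 - a / b * (a * b / (a ^ 2 * cos θ ^ 2 + b ^ 2 * sin θ ^ 2))) := by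
      intro θ
      have hnum : a ^ 2 * cos θ ^ 2 + b ^ 2 * sin θ ^ 2 - a / b * (a * b)
          = (b ^ 2 - a ^ 2) * sin θ ^ 2 := by
        rw [cos_sq']
        field_simp
        ring
      rw [← mul_div_assoc, one_sub_div (hD θ), hnum]
      field_simp
    simp only [hsplit]
    have hint := (continuous_mul_div_mul_cos_sq_add_mul_sin_sq ha hb (a * b)).const_mul (a / b)
    rw [intervalIntegral.integral_const_mul,
      intervalIntegral.integral_sub intervalIntegrable_const (hint.intervalIntegrable _ _),
      intervalIntegral.integral_const, intervalIntegral.integral_const_mul,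
      integral_mul_div_mul_cos_sq_add_mul_sin_sq ha hb]
    field_simp
    ring

lemma sin_image_Ioo : sin '' Ioo (-(π / 2)) (π / 2) = Ioo (-1) 1 := by
  refine mapsTo_sin_Ioo.image_subset.antisymm fun x hx => ?_
  exact ⟨arcsin x, ⟨neg_pi_div_two_lt_arcsin.2 hx.1, arcsin_lt_pi_div_two.2 hx.2⟩,
    sin_arcsin hx.1.le hx.2.le⟩

lemma setIntegral_Ioo_neg_one_one_eq_setIntegral_sin {E : Type*} [NormedAddCommGroup E]
    [NormedSpace ℝ E] (g : ℝ → E) :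
    ∫ x in Ioo (-1) 1, g x = ∫ θ in Ioo (-(π / 2)) (π / 2), cos θ • g (sin θ) := by
  rw [← sin_image_Ioo, integral_image_eq_integral_abs_deriv_smul measurableSet_Ioo
    (fun θ _ => (hasDerivAt_sin θ).hasDerivWithinAt) (injOn_sin.mono Ioo_subset_Icc_self)]
  exact setIntegral_congr_fun measurableSet_Ioo fun θ hθ => by
    rw [abs_of_pos (cos_pos_of_mem_Ioo hθ)]

lemma integral_withDensity_ofReal {X : Type*} [MeasurableSpace X] {μ : Measure X} {ρ : X → ℝ}
    (hρ : Measurable ρ) (hρ0 : ∀ x, 0 ≤ ρ x) {E : Type*} [NormedAddCommGroup E]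
    [NormedSpace ℝ E] (f : X → E) :
    ∫ x, f x ∂μ.withDensity (fun x => ENNReal.ofReal (ρ x)) = ∫ x, ρ x • f x ∂μ := by
  rw [integral_withDensity_eq_integral_toReal_smul hρ.ennreal_ofReal
    (ae_of_all _ fun _ => ENNReal.ofReal_lt_top)]
  simp only [ENNReal.toReal_ofReal (hρ0 _)]

noncomputable def μDensity (κ x : ℝ) : ℝ :=
  (1 - κ ^ 4) / (π * ((1 - κ ^ 2) ^ 2 + 4 * κ ^ 2 * x ^ 2) * √(1 - x ^ 2))

lemma μDensity_nonneg {κ : ℝ} (hκ : κ ^ 2 < 1) (x : ℝ) : 0 ≤ μDensity κ x := by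
  have hnum : 0 ≤ 1 - κ ^ 4 := by nlinarith
  unfold μDensity
  positivity

lemma measurable_μDensity (κ : ℝ) : Measurable (μDensity κ) := by
  unfold μDensity
  fun_prop

lemma integral_sq_withDensity_μDensity {κ : ℝ} (hκ : κ ^ 2 < 1) :
    ∫ x, x ^ 2 ∂volume.withDensity
      (fun x => ENNReal.ofReal ((Ioo (-1 : ℝ) 1).indicator (μDensity κ) x)) = (1 - κ ^ 2) / 2 := by
  have ha : 0 < 1 - κ ^ 2 := by linarith
  have hb : 0 < 1 + κ ^ 2 := by positivity
  calc ∫ x, x ^ 2 ∂volume.withDensity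
        (fun x => ENNReal.ofReal ((Ioo (-1 : ℝ) 1).indicator (μDensity κ) x))
      = ∫ x in Ioo (-1) 1, μDensity κ x * x ^ 2 := by
        rw [integral_withDensity_ofReal ((measurable_μDensity κ).indicator measurableSet_Ioo)
          (indicator_nonneg fun x _ => μDensity_nonneg hκ x),
          ← integral_indicator measurableSet_Ioo]
        simp only [smul_eq_mul, indicator_mul_left]
    _ = ∫ θ in Ioo (-(π / 2)) (π / 2), (1 - κ ^ 4) / π *
          (sin θ ^ 2 / ((1 - κ ^ 2) ^ 2 * cos θ ^ 2 + (1 + κ ^ 2) ^ 2 * sin θ ^ 2)) := by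
        rw [setIntegral_Ioo_neg_one_one_eq_setIntegral_sin]
        refine setIntegral_congr_fun measurableSet_Ioo fun θ hθ => ?_
        have hcos := cos_pos_of_mem_Ioo hθ
        have hD := (mul_cos_sq_add_mul_sin_sq_pos (pow_pos ha 2) (pow_pos hb 2) θ).ne'
        have hE : (1 - κ ^ 2) ^ 2 + 4 * κ ^ 2 * sin θ ^ 2
            = (1 - κ ^ 2) ^ 2 * cos θ ^ 2 + (1 + κ ^ 2) ^ 2 * sin θ ^ 2 := by
          rw [cos_sq']
          ring
        rw [smul_eq_mul, μDensity, ← cos_eq_sqrt_one_sub_sin_sq hθ.1.le hθ.2.le, hE]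
        field_simp
    _ = (1 - κ ^ 2) / 2 := by
        rw [← integral_Ioc_eq_integral_Ioo,
          ← intervalIntegral.integral_of_le (by linarith [pi_pos]),
          intervalIntegral.integral_const_mul, integral_sin_sq_div_mul_cos_sq_add_mul_sin_sq ha hb]
        field_simp
        ring

/-- For the family `μ_κ` with density `(1-κ⁴)/(π((1-κ²)²+4κ²x²)√(1-x²))` on `(-1,1)`,
the variance equals `(1-κ²)/2`, tends to `0` as `κ → 1⁻`, and consequently the infimum
of the variances over `κ ∈ [0,1)` is `0`. -/
theorem stmt_6 (μ : ℝ → Measure ℝ)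
    (hμ : ∀ κ ∈ Ico (0 : ℝ) 1, μ κ = volume.withDensity (fun x : ℝ =>
      ENNReal.ofReal ((Ioo (-1 : ℝ) 1).indicator
        (fun x => (1 - κ ^ 4) /
          (π * ((1 - κ ^ 2) ^ 2 + 4 * κ ^ 2 * x ^ 2) * Real.sqrt (1 - x ^ 2))) x))) :
    (∀ κ ∈ Ico (0 : ℝ) 1, (∫ x, x ^ 2 ∂(μ κ)) = (1 - κ ^ 2) / 2) ∧
    Tendsto (fun κ => ∫ x, x ^ 2 ∂(μ κ)) (nhdsWithin 1 (Ico (0 : ℝ) 1)) (nhds 0) ∧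
    sInf ((fun κ => ∫ x, x ^ 2 ∂(μ κ)) '' Ico (0 : ℝ) 1) = 0 := by
  have hvar : ∀ κ ∈ Ico (0 : ℝ) 1, (∫ x, x ^ 2 ∂(μ κ)) = (1 - κ ^ 2) / 2 := fun κ hκ => by
    rw [hμ κ hκ]
    exact integral_sq_withDensity_μDensity (by nlinarith [hκ.1, hκ.2])
  have hlim : Tendsto (fun κ => ∫ x, x ^ 2 ∂(μ κ)) (nhdsWithin 1 (Ico (0 : ℝ) 1)) (nhds 0) := by
    have h : Tendsto (fun κ : ℝ => (1 - κ ^ 2) / 2) (nhds 1) (nhds 0) := by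
      convert (by fun_prop : Continuous fun κ : ℝ => (1 - κ ^ 2) / 2).tendsto 1
      norm_num
    exact (h.mono_left nhdsWithin_le_nhds).congr'
      (eventually_nhdsWithin_of_forall fun κ hκ => (hvar κ hκ).symm)
  refine ⟨hvar, hlim, IsGLB.csInf_eq ?_ ⟨_, mem_image_of_mem _ (left_mem_Ico.2 one_pos)⟩⟩
  have := right_nhdsWithin_Ico_neBot (zero_lt_one' ℝ)
  refine isGLB_of_mem_closure ?_ (mem_closure_of_tendsto hlim
    (eventually_nhdsWithin_of_forall fun κ hκ => mem_image_of_mem _ hκ))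
  rintro _ ⟨κ, hκ, rfl⟩
  dsimp only
  rw [hvar κ hκ]
  nlinarith [hκ.1, hκ.2]
end
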